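/- Let Θ be a finite nonempty set and Φ : Δ_Θ → ℝ a differentiable strictly convex entropy whose conjugate Φ* is differentiable, with ∇Φ and ∇Φ* mutually inverse bijections between the relative interior of Δ_Θ and ℝ^Θ modulo translation by multiples of 𝟏 (i.e., ∇Φ*(∇Φ(μ)) = μ and ∇Φ(∇Φ*(v)) − v is a multiple of 𝟏). Then for every μ₀ in the relative interior of Δ_Θ and every a ∈ ℝ^Θ, the point μ* := ∇Φ*(∇Φ(μ₀) − a) attains the infimum of μ ↦ ⟨μ, a⟩ + D_Φ(μ, μ₀) over Δ_Θ. -/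

import Mathlib

open Finset

/-- The probability simplex over a finite set `Θ`. -/
def probSimplex (Θ : Type*) [Fintype Θ] : Set (Θ → ℝ) :=
  {μ | (∀ θ, 0 ≤ μ θ) ∧ ∑ θ, μ θ = 1}

/-- The relative interior of the probability simplex. -/
def probSimplexRI (Θ : Type*) [Fintype Θ] : Set (Θ → ℝ) :=
  {μ | (∀ θ, 0 < μ θ) ∧ ∑ θ, μ θ = 1}

/-- Standard inner product on `ℝ^Θ`. -/
noncomputable def ip {Θ : Type*} [Fintype Θ] (v w : Θ → ℝ) : ℝ := ∑ θ, v θ * w θ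

/-- Convex conjugate of a function on the probability simplex:
`Φ*(v) = sup_{μ ∈ Δ_Θ} ⟨μ, v⟩ − Φ(μ)`. -/
noncomputable def conjF {Θ : Type*} [Fintype Θ] (Φ : (Θ → ℝ) → ℝ) (v : Θ → ℝ) : ℝ :=
  sSup ((fun μ => ip μ v - Φ μ) '' probSimplex Θ)

/-- The continuous linear functional `w ↦ ⟨g, w⟩` associated with a vector `g : Θ → ℝ`;
used to express that `g` is a gradient. -/
noncomputable def toCLM {Θ : Type*} [Fintype Θ] (g : Θ → ℝ) : (Θ → ℝ) →L[ℝ] ℝ :=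
  ∑ θ, g θ • (ContinuousLinearMap.proj θ : (Θ → ℝ) →L[ℝ] ℝ)

/-- Bregman divergence `D_Φ(μ', μ) = Φ(μ') − Φ(μ) − ⟨∇Φ(μ), μ' − μ⟩`, where the
gradient of `Φ` is given by `g`. -/
noncomputable def bregDiv {Θ : Type*} [Fintype Θ] (Φ : (Θ → ℝ) → ℝ)
    (g : (Θ → ℝ) → Θ → ℝ) (μ' μ : Θ → ℝ) : ℝ :=
  Φ μ' - Φ μ - ip (g μ) (fun θ => μ' θ - μ θ)

/-- The proper loss `λ^Φ(μ) = Φ*(∇Φ(μ))·𝟏 − ∇Φ(μ)` associated with entropy `Φ`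
with gradient `g`. -/
noncomputable def lamLoss {Θ : Type*} [Fintype Θ] (Φ : (Θ → ℝ) → ℝ)
    (g : (Θ → ℝ) → Θ → ℝ) (μ : Θ → ℝ) : Θ → ℝ :=
  fun θ => conjF Φ (g μ) - g μ θ

/-- Negative Shannon entropy `(−H)(μ) = ∑ θ, μ(θ) log μ(θ)` (with `0 log 0 = 0`,
since `Real.log 0 = 0`). -/
noncomputable def negH {Θ : Type*} [Fintype Θ] (μ : Θ → ℝ) : ℝ :=
  ∑ θ, μ θ * Real.log (μ θ)

/-! The update `μ*` is the minimiser because, up to a constant, the objective is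
`Φ μ - ⟨μ, ∇Φ(μ₀) - a⟩`, a convex function whose gradient at `μ*` is `c • 𝟏` by the inversion
property. A multiple of `𝟏` is orthogonal to every direction inside the simplex, so the
first-order inequality for convex functions makes `μ*` a minimiser over the whole simplex. -/

theorem ConvexOn.hasFDerivWithinAt_le_sub {E : Type*} [NormedAddCommGroup E] [NormedSpace ℝ E]
    {s : Set E} {f : E → ℝ} {f' : E →L[ℝ] ℝ} {x y : E}
    (hf : ConvexOn ℝ s f) (hx : x ∈ s) (hy : y ∈ s) (hf' : HasFDerivWithinAt f f' s x) :
    f' (y - x) ≤ f y - f x := by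
  set ℓ : ℝ →ᵃ[ℝ] E := AffineMap.lineMap x y
  have hderiv : HasDerivWithinAt (f ∘ ℓ) (f' (y - x)) (ℓ ⁻¹' s) 0 :=
    hf'.comp_hasDerivWithinAt_of_eq 0 AffineMap.hasDerivWithinAt_lineMap
      (fun _ ht => ht) (AffineMap.lineMap_apply_zero x y).symm
  simpa [ℓ, slope_def_field] using (hf.comp_affineMap ℓ).le_slope_of_hasDerivWithinAt
    (by simpa [ℓ] using hx) (by simpa [ℓ] using hy) zero_lt_one hderiv

section Simplex

variable {Θ : Type*} [Fintype Θ]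

theorem ip_eq_dotProduct (v w : Θ → ℝ) : ip v w = v ⬝ᵥ w := rfl

theorem toCLM_apply (g w : Θ → ℝ) : toCLM g w = g ⬝ᵥ w := by
  simp [toCLM, dotProduct]

theorem probSimplexRI_subset_probSimplex : probSimplexRI Θ ⊆ probSimplex Θ :=
  fun _ hμ => ⟨fun θ => (hμ.1 θ).le, hμ.2⟩

theorem one_dotProduct_sub_of_mem_probSimplex {μ ν : Θ → ℝ} (hμ : μ ∈ probSimplex Θ)
    (hν : ν ∈ probSimplex Θ) : (1 : Θ → ℝ) ⬝ᵥ (μ - ν) = 0 := by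
  simp [one_dotProduct, hμ.2, hν.2]

theorem isMinOn_sub_ip_of_hasFDerivWithinAt {Φ : (Θ → ℝ) → ℝ} {x v : Θ → ℝ} {c : ℝ}
    (hΦ : ConvexOn ℝ (probSimplex Θ) Φ) (hx : x ∈ probSimplex Θ)
    (hd : HasFDerivWithinAt Φ (toCLM (v + c • 1)) (probSimplex Θ) x) :
    IsMinOn (fun μ => Φ μ - ip μ v) (probSimplex Θ) x := by
  refine isMinOn_iff.mpr fun μ hμ => ?_
  have hgrad := hΦ.hasFDerivWithinAt_le_sub hx hμ hd
  rw [toCLM_apply, add_dotProduct, smul_dotProduct, one_dotProduct_sub_of_mem_probSimplex hμ hx,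
    smul_zero, add_zero, dotProduct_sub] at hgrad
  simp only [ip_eq_dotProduct, dotProduct_comm _ v]
  linarith

theorem ip_add_bregDiv_eq (Φ : (Θ → ℝ) → ℝ) (g : (Θ → ℝ) → Θ → ℝ) (μ μ₀ a : Θ → ℝ) :
    ip μ a + bregDiv Φ g μ μ₀ = Φ μ - ip μ (g μ₀ - a) + (ip μ₀ (g μ₀) - Φ μ₀) := by
  simp only [bregDiv, ip_eq_dotProduct]
  simp only [← Pi.sub_def, dotProduct_sub, dotProduct_comm _ (g μ₀)]
  ring

end Simplex

theorem gaa_update_attains_inf_general {Θ : Type*} [Fintype Θ]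
    (Φ : (Θ → ℝ) → ℝ) (gradΦ gradConj : (Θ → ℝ) → Θ → ℝ)
    (hconv : StrictConvexOn ℝ (probSimplex Θ) Φ)
    (hdiff : ∀ μ ∈ probSimplexRI Θ,
      HasFDerivWithinAt Φ (toCLM (gradΦ μ)) (probSimplex Θ) μ)
    (hmem : ∀ v : Θ → ℝ, gradConj v ∈ probSimplexRI Θ)
    (hinv₂ : ∀ v : Θ → ℝ, ∃ c : ℝ, gradΦ (gradConj v) = v + c • (1 : Θ → ℝ))
    (μ₀ : Θ → ℝ) (a : Θ → ℝ) :
    gradConj (gradΦ μ₀ - a) ∈ probSimplex Θ ∧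
      ∀ μ ∈ probSimplex Θ,
        ip (gradConj (gradΦ μ₀ - a)) a + bregDiv Φ gradΦ (gradConj (gradΦ μ₀ - a)) μ₀
          ≤ ip μ a + bregDiv Φ gradΦ μ μ₀ := by
  obtain ⟨c, hc⟩ := hinv₂ (gradΦ μ₀ - a)
  set μs := gradConj (gradΦ μ₀ - a)
  have hμs : μs ∈ probSimplex Θ := probSimplexRI_subset_probSimplex (hmem _)
  have hmin : IsMinOn (fun μ => Φ μ - ip μ (gradΦ μ₀ - a)) (probSimplex Θ) μs :=
    isMinOn_sub_ip_of_hasFDerivWithinAt hconv.convexOn hμs (hc ▸ hdiff μs (hmem _))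
  refine ⟨hμs, fun μ hμ => ?_⟩
  rw [ip_add_bregDiv_eq, ip_add_bregDiv_eq]
  linarith [isMinOn_iff.mp hmin μ hμ]

/-- for a strictly convex differentiable entropy `Φ` whose conjugate is
differentiable, with `∇Φ` and `∇Φ*` mutually inverse (modulo multiples of `𝟏`), the
point `μ* = ∇Φ*(∇Φ(μ₀) − a)` attains the infimum of `μ ↦ ⟨μ, a⟩ + D_Φ(μ, μ₀)`
over the simplex. -/
theorem gaa_update_attains_inf {Θ : Type*} [Fintype Θ] [Nonempty Θ]
    (Φ : (Θ → ℝ) → ℝ) (gradΦ gradConj : (Θ → ℝ) → Θ → ℝ)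
    (hconv : StrictConvexOn ℝ (probSimplex Θ) Φ)
    (hlsc : LowerSemicontinuousOn Φ (probSimplex Θ))
    (hdiff : ∀ μ ∈ probSimplexRI Θ,
      HasFDerivWithinAt Φ (toCLM (gradΦ μ)) (probSimplex Θ) μ)
    (hconjdiff : ∀ v : Θ → ℝ, HasFDerivAt (conjF Φ) (toCLM (gradConj v)) v)
    (hmem : ∀ v : Θ → ℝ, gradConj v ∈ probSimplexRI Θ)
    (hinv₁ : ∀ μ ∈ probSimplexRI Θ, gradConj (gradΦ μ) = μ)
    (hinv₂ : ∀ v : Θ → ℝ, ∃ c : ℝ, gradΦ (gradConj v) = v + c • (1 : Θ → ℝ))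
    (μ₀ : Θ → ℝ) (hμ₀ : μ₀ ∈ probSimplexRI Θ) (a : Θ → ℝ) :
    gradConj (gradΦ μ₀ - a) ∈ probSimplex Θ ∧
      ∀ μ ∈ probSimplex Θ,
        ip (gradConj (gradΦ μ₀ - a)) a + bregDiv Φ gradΦ (gradConj (gradΦ μ₀ - a)) μ₀
          ≤ ip μ a + bregDiv Φ gradΦ μ μ₀ :=
  gaa_update_attains_inf_general Φ gradΦ gradConj hconv hdiff hmem hinv₂ μ₀ a
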